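/- Consider the square pyramid in ℝ³ with apex A=(0,0,α) and base vertices B=(β,0,0), C=(0,γ,0), D=(−β,0,0), E=(0,−γ,0), where α, β, γ > 0. For any interior point P=(x,y,z), the sum of the distances from P to the five faces equals (1 − 4βγ/Δ)·z + 4αβγ/Δ, where Δ = √(α²γ² + α²β² + β²γ²). In particular this sum is constant if and only if α = √15·βγ/√(β²+γ²). -/

import Mathlib

open Metric

noncomputable section

abbrev E3 := EuclideanSpace ℝ (Fin 3)

def pt3 (x y z : ℝ) : E3 := WithLp.toLp 2 ![x, y, z]

/-- The sum of the distances from `P` to the planes containing the five faces of the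
pyramid with apex `A=(0,0,α)` and base vertices `B=(β,0,0)`, `C=(0,γ,0)`, `D=(-β,0,0)`,
`E=(0,-γ,0)`: the base `BCDE` and the lateral faces `ABC`, `ACD`, `ADE`, `AEB`. -/
def pyrSum (α β γ : ℝ) (P : E3) : ℝ :=
  infDist P (affineSpan ℝ {pt3 β 0 0, pt3 0 γ 0, pt3 (-β) 0 0} : Set E3)
    + infDist P (affineSpan ℝ {pt3 0 0 α, pt3 β 0 0, pt3 0 γ 0} : Set E3)
    + infDist P (affineSpan ℝ {pt3 0 0 α, pt3 0 γ 0, pt3 (-β) 0 0} : Set E3)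
    + infDist P (affineSpan ℝ {pt3 0 0 α, pt3 (-β) 0 0, pt3 0 (-γ) 0} : Set E3)
    + infDist P (affineSpan ℝ {pt3 0 0 α, pt3 0 (-γ) 0, pt3 β 0 0} : Set E3)

/-- The interior of the solid pyramid `ABCDE`. -/
def pyrInterior (α β γ : ℝ) : Set E3 :=
  interior (convexHull ℝ
    ({pt3 0 0 α, pt3 β 0 0, pt3 0 γ 0, pt3 (-β) 0 0, pt3 0 (-γ) 0} : Set E3))

open scoped RealInnerProductSpace

/-!
Each lateral face spans a plane `x/a + y/b + z/α = 1` with `a = ±β`, `b = ±γ`, whose normal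
`(1/a, 1/b, 1/α)` has length `Δ/(αβγ)`; the base spans `z = 0`. An interior point lies strictly
on the pyramid's side of each of these planes, so every distance is an affine function of `P`
with known sign. In the sum of the four lateral distances the terms `±x/β` and `±y/γ` cancel,
leaving `4(1 - z/α)·αβγ/Δ`, and the base contributes `z`. Hence the sum is constant exactly when
its slope `1 - 4βγ/Δ` vanishes, i.e. `Δ² = 16β²γ²`, i.e. `α²(β² + γ²) = 15β²γ²`.
-/

section Hyperplane

variable {E : Type*} [NormedAddCommGroup E] [InnerProductSpace ℝ E]

theorem infDist_setOf_inner_eq {n : E} (hn : n ≠ 0) (c : ℝ) (P : E) :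
    infDist P {p | ⟪n, p⟫ = c} = |⟪n, P⟫ - c| / ‖n‖ := by
  have hn' : 0 < ‖n‖ := norm_pos_iff.mpr hn
  set Q := P - ((⟪n, P⟫ - c) / ‖n‖ ^ 2) • n
  have hQ : ⟪n, Q⟫ = c := by
    simp only [Q, inner_sub_right, inner_smul_right, real_inner_self_eq_norm_sq]
    field_simp
    ring
  have hPQ : dist P Q = |⟪n, P⟫ - c| / ‖n‖ := by
    rw [dist_eq_norm, sub_sub_cancel, norm_smul, Real.norm_eq_abs, abs_div,
      abs_of_pos (by positivity : 0 < ‖n‖ ^ 2)]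
    field_simp
  refine le_antisymm (hPQ ▸ infDist_le_dist_of_mem hQ) ((le_infDist ⟨Q, hQ⟩).2 fun R hR => ?_)
  rw [div_le_iff₀ hn', dist_eq_norm, ← hR, ← inner_sub_right, mul_comm]
  exact abs_real_inner_le_norm n (P - R)

theorem coe_affineSpan_triple_eq_setOf_inner_eq {p₁ p₂ p₃ n : E} {c : ℝ}
    (h₁ : ⟪n, p₁⟫ = c) (h₂ : ⟪n, p₂⟫ = c) (h₃ : ⟪n, p₃⟫ = c)
    (hspan : ∀ p, ⟪n, p⟫ = c → ∃ s t : ℝ, p = s • (p₂ - p₁) + t • (p₃ - p₁) + p₁) :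
    (affineSpan ℝ {p₁, p₂, p₃} : Set E) = {p | ⟪n, p⟫ = c} := by
  refine Set.Subset.antisymm (fun p hp => ?_) (fun p hp => ?_)
  · have hagree :
        Set.EqOn (innerₛₗ ℝ n).toAffineMap (AffineMap.const ℝ E c) {p₁, p₂, p₃} := by
      rintro q (rfl | rfl | rfl) <;> assumption
    exact AffineMap.eqOn_affineSpan hagree hp
  · obtain ⟨s, t, rfl⟩ := hspan p hp
    have hmem : ∀ q ∈ ({p₁, p₂, p₃} : Set E), q - p₁ ∈ vectorSpan ℝ ({p₁, p₂, p₃} : Set E) :=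
      fun q hq => vsub_mem_vectorSpan ℝ hq (by simp)
    refine AffineSubspace.vadd_mem_of_mem_direction ?_ (mem_affineSpan ℝ (by simp))
    rw [direction_affineSpan]
    exact add_mem (Submodule.smul_mem _ _ (hmem p₂ (by simp)))
      (Submodule.smul_mem _ _ (hmem p₃ (by simp)))

theorem inner_lt_of_mem_interior_convexHull {n : E} (hn : n ≠ 0) {c : ℝ} {S : Set E}
    (hS : ∀ v ∈ S, ⟪n, v⟫ ≤ c) {P : E} (hP : P ∈ interior (convexHull ℝ S)) : ⟪n, P⟫ < c := by
  have hhull : convexHull ℝ S ⊆ innerSL ℝ n ⁻¹' Set.Iic c :=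
    convexHull_min hS ((convex_Iic c).linear_preimage (innerₛₗ ℝ n))
  have hne : innerSL ℝ n ≠ 0 := fun h => hn (by simpa using congrArg (· n) h)
  have hint := interior_mono hhull hP
  rwa [← ((innerSL ℝ n).isOpenMap_of_ne_zero hne).preimage_interior_eq_interior_preimage
    (innerSL ℝ n).continuous, interior_Iic] at hint

end Hyperplane

@[simp] theorem pt3_apply_zero (x y z : ℝ) : pt3 x y z 0 = x := rfl
@[simp] theorem pt3_apply_one (x y z : ℝ) : pt3 x y z 1 = y := rfl
@[simp] theorem pt3_apply_two (x y z : ℝ) : pt3 x y z 2 = z := rfl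

theorem inner_pt3 (a b c : ℝ) (p : E3) : ⟪pt3 a b c, p⟫ = a * p 0 + b * p 1 + c * p 2 := by
  simp [PiLp.inner_apply, Fin.sum_univ_three, pt3, mul_comm]

theorem norm_pt3 (a b c : ℝ) : ‖pt3 a b c‖ = √(a ^ 2 + b ^ 2 + c ^ 2) := by
  simp [EuclideanSpace.norm_eq, pt3, Fin.sum_univ_three]

theorem pt3_ne_zero {a b c : ℝ} (hc : c ≠ 0) : pt3 a b c ≠ 0 :=
  fun h => hc (by simpa using congrArg (· 2) h)

theorem infDist_affineSpan_base {β γ : ℝ} (hβ : β ≠ 0) (hγ : γ ≠ 0) (P : E3) :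
    infDist P (affineSpan ℝ {pt3 β 0 0, pt3 0 γ 0, pt3 (-β) 0 0} : Set E3) = |P 2| := by
  rw [coe_affineSpan_triple_eq_setOf_inner_eq (n := pt3 0 0 1) (c := 0) (by simp [inner_pt3])
      (by simp [inner_pt3]) (by simp [inner_pt3]) ?_,
    infDist_setOf_inner_eq (pt3_ne_zero one_ne_zero), inner_pt3, norm_pt3]
  · simp
  intro p hp
  rw [inner_pt3] at hp
  refine ⟨p 1 / γ, (β - p 1 / γ * β - p 0) / (2 * β), ?_⟩
  ext i
  fin_cases i <;> simp [pt3]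
  · field_simp
    ring
  · field_simp
  · linarith

theorem infDist_affineSpan_intercepts {a b c : ℝ} (ha : a ≠ 0) (hb : b ≠ 0) (hc : c ≠ 0)
    (P : E3) :
    infDist P (affineSpan ℝ {pt3 0 0 c, pt3 a 0 0, pt3 0 b 0} : Set E3) =
      |P 0 / a + P 1 / b + P 2 / c - 1| / √(1 / a ^ 2 + 1 / b ^ 2 + 1 / c ^ 2) := by
  rw [coe_affineSpan_triple_eq_setOf_inner_eq (n := pt3 a⁻¹ b⁻¹ c⁻¹) (c := 1)
      (by simp [inner_pt3, hc]) (by simp [inner_pt3, ha]) (by simp [inner_pt3, hb]) ?_,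
    infDist_setOf_inner_eq (pt3_ne_zero (inv_ne_zero hc)), inner_pt3, norm_pt3]
  · simp only [inv_pow, div_eq_inv_mul, mul_one]
  intro p hp
  rw [inner_pt3] at hp
  refine ⟨p 0 / a, p 1 / b, ?_⟩
  ext i
  fin_cases i <;> simp [pt3]
  · field_simp
  · field_simp
  · field_simp at hp ⊢
    linear_combination hp

section Pyramid

variable {α β γ : ℝ}

theorem pos_of_mem_pyrInterior (hα : 0 < α) {P : E3} (hP : P ∈ pyrInterior α β γ) :
    0 < P 2 := by
  have h := inner_lt_of_mem_interior_convexHull (n := pt3 0 0 (-1))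
    (pt3_ne_zero (neg_ne_zero.2 one_ne_zero)) (c := 0) ?_ hP
  · simpa [inner_pt3] using h
  rintro v (rfl | rfl | rfl | rfl | rfl) <;> simp [inner_pt3, hα.le]

theorem lateral_lt_one_of_mem_pyrInterior (hα : α ≠ 0) {a b : ℝ} (ha : |a| = β) (hb : |b| = γ)
    {P : E3} (hP : P ∈ pyrInterior α β γ) : P 0 / a + P 1 / b + P 2 / α < 1 := by
  have hvertex : ∀ {x d : ℝ}, |x| ≤ |d| → d⁻¹ * x ≤ 1 := fun h =>
    (le_abs_self _).trans (by rw [abs_mul, abs_inv]; exact inv_mul_le_one_of_le₀ h (abs_nonneg _))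
  have h := inner_lt_of_mem_interior_convexHull (n := pt3 a⁻¹ b⁻¹ α⁻¹)
    (pt3_ne_zero (inv_ne_zero hα)) (c := 1) ?_ hP
  · simpa [inner_pt3, div_eq_inv_mul] using h
  rintro v (rfl | rfl | rfl | rfl | rfl) <;> simp only [inner_pt3, pt3_apply_zero,
    pt3_apply_one, pt3_apply_two, mul_zero, zero_add, add_zero]
  · rw [inv_mul_cancel₀ hα]
  · exact hvertex (by rw [← ha, abs_abs])
  · exact hvertex (by rw [← hb, abs_abs])
  · exact hvertex (by rw [abs_neg, ← ha, abs_abs])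
  · exact hvertex (by rw [abs_neg, ← hb, abs_abs])

theorem mem_convexHull_pyramid (hα : 0 < α) (hβ : 0 < β) (hγ : 0 < γ) {p : E3}
    (hz : 0 ≤ p 2) (hp : |p 0| / β + |p 1| / γ + p 2 / α ≤ 1) :
    p ∈ convexHull ℝ
      ({pt3 0 0 α, pt3 β 0 0, pt3 0 γ 0, pt3 (-β) 0 0, pt3 0 (-γ) 0} : Set E3) := by
  set r := 1 - (|p 0| / β + |p 1| / γ + p 2 / α) with hr
  have hr₀ : 0 ≤ r := by linarith
  set w : Fin 5 → ℝ := ![p 2 / α, (p 0)⁺ / β + r / 2, (p 1)⁺ / γ, (p 0)⁻ / β + r / 2, (p 1)⁻ / γ]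
  set v : Fin 5 → E3 := ![pt3 0 0 α, pt3 β 0 0, pt3 0 γ 0, pt3 (-β) 0 0, pt3 0 (-γ) 0]
  have hw : ∀ i ∈ Finset.univ, 0 ≤ w i := by
    intro i _
    fin_cases i <;> simp [w] <;> positivity
  have hw₁ : ∑ i, w i = 1 := by
    simp [w, Fin.sum_univ_five, hr, ← posPart_add_negPart]
    field_simp
    ring
  have hp : ∑ i, w i • v i = p := by
    ext j
    fin_cases j <;> simp [w, v, Fin.sum_univ_five, pt3] <;> field_simp
    · linarith [posPart_sub_negPart (p 0)]
    · linarith [posPart_sub_negPart (p 1)]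
  rw [← hp]
  exact (convex_convexHull ℝ _).sum_mem hw hw₁
    fun i _ => subset_convexHull ℝ _ (by fin_cases i <;> simp [v])

theorem setOf_subset_pyrInterior (hα : 0 < α) (hβ : 0 < β) (hγ : 0 < γ) :
    {p : E3 | 0 < p 2 ∧ |p 0| / β + |p 1| / γ + p 2 / α < 1} ⊆ pyrInterior α β γ :=
  interior_maximal (fun _ hp => mem_convexHull_pyramid hα hβ hγ hp.1.le hp.2.le)
    ((isOpen_lt continuous_const (by fun_prop : Continuous fun p : E3 => p 2)).inter
      (isOpen_lt (by fun_prop : Continuous fun p : E3 => |p 0| / β + |p 1| / γ + p 2 / α)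
        continuous_const))

theorem pyrSum_eq_of_mem_pyrInterior (hα : 0 < α) (hβ : 0 < β) (hγ : 0 < γ) {P : E3}
    (hP : P ∈ pyrInterior α β γ) :
    pyrSum α β γ P =
      (1 - 4 * β * γ / √(α ^ 2 * γ ^ 2 + α ^ 2 * β ^ 2 + β ^ 2 * γ ^ 2)) * P 2
        + 4 * α * β * γ / √(α ^ 2 * γ ^ 2 + α ^ 2 * β ^ 2 + β ^ 2 * γ ^ 2) := by
  have hz := pos_of_mem_pyrInterior hα hP
  have hβ_abs : |β| = β := abs_of_pos hβ
  have hβ_neg : |-β| = β := abs_neg β ▸ hβ_abs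
  have hγ_abs : |γ| = γ := abs_of_pos hγ
  have hγ_neg : |-γ| = γ := abs_neg γ ▸ hγ_abs
  have hABC := lateral_lt_one_of_mem_pyrInterior hα.ne' hβ_abs hγ_abs hP
  have hACD := lateral_lt_one_of_mem_pyrInterior hα.ne' hβ_neg hγ_abs hP
  have hADE := lateral_lt_one_of_mem_pyrInterior hα.ne' hβ_neg hγ_neg hP
  have hAEB := lateral_lt_one_of_mem_pyrInterior hα.ne' hβ_abs hγ_neg hP
  have hnormal : √(1 / β ^ 2 + 1 / γ ^ 2 + 1 / α ^ 2) =
      √(α ^ 2 * γ ^ 2 + α ^ 2 * β ^ 2 + β ^ 2 * γ ^ 2) / (α * β * γ) := by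
    rw [eq_div_iff (by positivity), ← Real.sqrt_sq (by positivity : 0 ≤ α * β * γ),
      ← Real.sqrt_mul (by positivity)]
    congr 1
    field_simp
  rw [pyrSum, infDist_affineSpan_base hβ.ne' hγ.ne',
    infDist_affineSpan_intercepts hβ.ne' hγ.ne' hα.ne', Set.pair_comm (pt3 0 γ 0),
    infDist_affineSpan_intercepts (neg_ne_zero.2 hβ.ne') hγ.ne' hα.ne',
    infDist_affineSpan_intercepts (neg_ne_zero.2 hβ.ne') (neg_ne_zero.2 hγ.ne') hα.ne',
    Set.pair_comm (pt3 0 (-γ) 0),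
    infDist_affineSpan_intercepts hβ.ne' (neg_ne_zero.2 hγ.ne') hα.ne']
  rw [abs_of_pos hz, abs_of_neg (by linarith), abs_of_neg (by linarith),
    abs_of_neg (by linarith), abs_of_neg (by linarith)]
  simp only [neg_sq, hnormal]
  field_simp
  ring

theorem sqrt_eq_four_mul_iff (hα : 0 < α) (hβ : 0 < β) (hγ : 0 < γ) :
    √(α ^ 2 * γ ^ 2 + α ^ 2 * β ^ 2 + β ^ 2 * γ ^ 2) = 4 * β * γ ↔
      α = √15 * β * γ / √(β ^ 2 + γ ^ 2) := by
  rw [Real.sqrt_eq_iff_eq_sq (by positivity) (by positivity),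
    ← pow_left_inj₀ hα.le (by positivity) two_ne_zero]
  simp only [div_pow, mul_pow]
  rw [Real.sq_sqrt (by norm_num), Real.sq_sqrt (by positivity), eq_div_iff (by positivity)]
  constructor <;> intro h <;> linarith

end Pyramid

/-- For the pyramid with apex `A=(0,0,α)` and base vertices `B=(β,0,0)`, `C=(0,γ,0)`,
`D=(-β,0,0)`, `E=(0,-γ,0)` (`α,β,γ>0`), the sum of distances from an interior point
`P=(x,y,z)` to the five faces equals `(1 - 4βγ/Δ)·z + 4αβγ/Δ`, where
`Δ = √(α²γ² + α²β² + β²γ²)`; in particular it is constant if and only if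
`α = √15·βγ/√(β²+γ²)`. -/
theorem pyramid_viviani (α β γ : ℝ) (hα : 0 < α) (hβ : 0 < β) (hγ : 0 < γ) :
    (∀ x y z : ℝ, pt3 x y z ∈ pyrInterior α β γ →
      pyrSum α β γ (pt3 x y z) =
        (1 - 4 * β * γ / Real.sqrt (α ^ 2 * γ ^ 2 + α ^ 2 * β ^ 2 + β ^ 2 * γ ^ 2)) * z
          + 4 * α * β * γ / Real.sqrt (α ^ 2 * γ ^ 2 + α ^ 2 * β ^ 2 + β ^ 2 * γ ^ 2)) ∧
    ((∀ P ∈ pyrInterior α β γ, ∀ Q ∈ pyrInterior α β γ,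
        pyrSum α β γ P = pyrSum α β γ Q)
      ↔ α = Real.sqrt 15 * β * γ / Real.sqrt (β ^ 2 + γ ^ 2)) := by
  have hsum {P : E3} (hP : P ∈ pyrInterior α β γ) := pyrSum_eq_of_mem_pyrInterior hα hβ hγ hP
  have haxis {t : ℝ} (ht₀ : 0 < t) (ht : t < α) : pt3 0 0 t ∈ pyrInterior α β γ :=
    setOf_subset_pyrInterior hα hβ hγ ⟨ht₀, by simpa using (div_lt_one hα).2 ht⟩
  refine ⟨fun x y z hP => hsum hP, ?_⟩
  rw [← sqrt_eq_four_mul_iff hα hβ hγ]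
  set Δ := √(α ^ 2 * γ ^ 2 + α ^ 2 * β ^ 2 + β ^ 2 * γ ^ 2)
  have hΔ : 0 < Δ := by positivity
  constructor
  · intro hconst
    have h₁ := haxis (t := α / 4) (by positivity) (by linarith)
    have h₂ := haxis (t := α / 2) (by positivity) (by linarith)
    have h := hconst _ h₁ _ h₂
    rw [hsum h₁, hsum h₂, pt3_apply_two, pt3_apply_two] at h
    have hslope : (1 - 4 * β * γ / Δ) * α = 0 := by linarith
    rw [mul_eq_zero, sub_eq_zero, eq_comm, div_eq_one_iff_eq hΔ.ne', eq_comm] at hslope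
    exact hslope.resolve_right hα.ne'
  · intro hΔeq P hP Q hQ
    rw [hsum hP, hsum hQ, hΔeq, div_self (by positivity), sub_self, zero_mul, zero_mul]
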